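/- Let A be a band-dominated bounded linear operator on ℓ²(ℤ) that is lower triangular and invertible, and suppose that its inverse A⁻¹ is also lower triangular. Then Q A Q + (I − Q) is Fredholm with index 0, i.e. ind₊(A) = 0. -/

import Mathlib

/-! `Q A' Q + (I − Q)` is a two-sided inverse of `Q A Q + (I − Q)`, so the latter is invertible,
hence Fredholm of index zero. Lower triangularity of `B = A, A'` says exactly that `B` maps the
range of `Q` into itself, i.e. `Q B Q = B Q`, and this kills every cross term in the product. -/

noncomputable section

/-- `ℓ²(ℤ)`, the Hilbert space of square-summable complex sequences indexed by `ℤ`. -/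
abbrev H : Type := lp (fun _ : ℤ => ℂ) 2

/-- The matrix entry `a_{ij} = ⟨e_i, A e_j⟩` of a bounded operator on `ℓ²(ℤ)`. -/
def entry (A : H →L[ℂ] H) (i j : ℤ) : ℂ := A (lp.single 2 j 1) i

/-- A band operator: all entries vanish outside a band `|i − j| ≤ w`. -/
def IsBandOperator (A : H →L[ℂ] H) : Prop :=
  ∃ w : ℕ, ∀ i j : ℤ, (w : ℤ) < |i - j| → entry A i j = 0

/-- A band-dominated operator: a norm limit of band operators. -/
def IsBandDominated (A : H →L[ℂ] H) : Prop :=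
  ∀ ε : ℝ, 0 < ε → ∃ B : H →L[ℂ] H, IsBandOperator B ∧ ‖A - B‖ < ε

/-- A bounded operator on a Hilbert space is Fredholm if its kernel is finite-dimensional
and its range is closed and of finite codimension. -/
def IsFredholm (T : H →L[ℂ] H) : Prop :=
  FiniteDimensional ℂ (LinearMap.ker (T : H →ₗ[ℂ] H)) ∧
  IsClosed (LinearMap.range (T : H →ₗ[ℂ] H) : Set H) ∧
  FiniteDimensional ℂ (H ⧸ LinearMap.range (T : H →ₗ[ℂ] H))

/-- The Fredholm index `ind(T) = dim ker T − dim coker T`. -/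
def fredholmIndex (T : H →L[ℂ] H) : ℤ :=
  (Module.finrank ℂ (LinearMap.ker (T : H →ₗ[ℂ] H)) : ℤ) -
  (Module.finrank ℂ (H ⧸ LinearMap.range (T : H →ₗ[ℂ] H)) : ℤ)

/-- A lower triangular operator: `a_{ij} = 0` whenever `j > i`. -/
def IsLowerTriangular (A : H →L[ℂ] H) : Prop := ∀ i j : ℤ, i < j → entry A i j = 0

theorem IsIdempotentElem.mul_mul_add_one_sub_mul_eq_one {R : Type*} [Ring R] {p a b : R}
    (hp : IsIdempotentElem p) (hb : p * b * p = b * p) (hab : a * b = 1) :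
    (p * a * p + (1 - p)) * (p * b * p + (1 - p)) = 1 := by
  have hb' : p * (b * p) = b * p := by rw [← mul_assoc, hb]
  have hab' (x : R) : a * (b * x) = x := by rw [← mul_assoc, hab, one_mul]
  simp only [add_mul, mul_add, sub_mul, mul_sub, mul_one, one_mul, mul_assoc, hp.eq, hb', hab']
  abel

theorem IsIdempotentElem.isUnit_mul_mul_add_one_sub {R : Type*} [Ring R] {p a b : R}
    (hp : IsIdempotentElem p) (ha : p * a * p = a * p) (hb : p * b * p = b * p)
    (hab : a * b = 1) (hba : b * a = 1) : IsUnit (p * a * p + (1 - p)) :=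
  ⟨⟨_, _, hp.mul_mul_add_one_sub_mul_eq_one hb hab, hp.mul_mul_add_one_sub_mul_eq_one ha hba⟩, rfl⟩

theorem isFredholm_of_isUnit {T : H →L[ℂ] H} (hT : IsUnit T) : IsFredholm T := by
  obtain ⟨hinj, hsurj⟩ := ContinuousLinearMap.isUnit_iff_bijective.mp hT
  rw [IsFredholm, LinearMap.ker_eq_bot.mpr hinj, LinearMap.range_eq_top.mpr hsurj,
    Submodule.top_coe]
  exact ⟨inferInstance, isClosed_univ, inferInstance⟩

theorem fredholmIndex_eq_zero_of_isUnit {T : H →L[ℂ] H} (hT : IsUnit T) :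
    fredholmIndex T = 0 := by
  obtain ⟨hinj, hsurj⟩ := ContinuousLinearMap.isUnit_iff_bijective.mp hT
  rw [fredholmIndex, LinearMap.ker_eq_bot.mpr hinj, LinearMap.range_eq_top.mpr hsurj,
    finrank_bot, Module.finrank_zero_of_subsingleton]
  rfl

def IsHalfLineProjection (Q : H →L[ℂ] H) : Prop :=
  ∀ (x : H) (i : ℤ), Q x i = if 1 ≤ i then x i else 0

namespace IsHalfLineProjection

variable {Q : H →L[ℂ] H} (hQ : IsHalfLineProjection Q)
include hQ

theorem isIdempotentElem : IsIdempotentElem Q := by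
  ext x i
  show Q (Q x) i = Q x i
  rw [hQ (Q x), hQ x]
  split_ifs <;> rfl

theorem apply_single (j : ℤ) : Q (lp.single 2 j 1) = if 1 ≤ j then lp.single 2 j 1 else 0 := by
  ext i
  rw [hQ]
  by_cases hi : i = j
  · subst hi
    split_ifs <;> simp
  · split_ifs <;> simp [hi]

theorem mul_mul_eq_mul_of_isLowerTriangular {B : H →L[ℂ] H} (hB : IsLowerTriangular B) :
    Q * B * Q = B * Q := by
  have : Fact (1 ≤ (2 : ENNReal)) := ⟨by norm_num⟩
  refine lp.ext_continuousLinearMap (by norm_num) fun j => ContinuousLinearMap.ext_ring ?_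
  simp only [ContinuousLinearMap.comp_apply, mul_apply_eq_comp,
    lp.singleContinuousLinearMap_apply, hQ.apply_single]
  split_ifs with hj
  · ext i
    rw [hQ]
    split_ifs with hi
    · rfl
    · exact (hB i j (by omega)).symm
  · simp

end IsHalfLineProjection

theorem lower_triangular_with_lower_triangular_inverse_plus_index_zero_general
    (A A' : H →L[ℂ] H)
    (hLT : IsLowerTriangular A)
    (hinv₁ : A' ∘L A = 1) (hinv₂ : A ∘L A' = 1)
    (hLT' : IsLowerTriangular A')
    (Q : H →L[ℂ] H)
    (hQ : ∀ (x : H) (i : ℤ), Q x i = if 1 ≤ i then x i else 0) :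
    IsFredholm (Q ∘L A ∘L Q + (1 - Q)) ∧
    fredholmIndex (Q ∘L A ∘L Q + (1 - Q)) = 0 := by
  have hQ' : IsHalfLineProjection Q := hQ
  have hunit : IsUnit (Q * A * Q + (1 - Q)) :=
    hQ'.isIdempotentElem.isUnit_mul_mul_add_one_sub
      (hQ'.mul_mul_eq_mul_of_isLowerTriangular hLT) (hQ'.mul_mul_eq_mul_of_isLowerTriangular hLT')
      hinv₂ hinv₁
  exact ⟨isFredholm_of_isUnit hunit, fredholmIndex_eq_zero_of_isUnit hunit⟩

/-- **Corollary 2.** A band-dominated, lower triangular, invertible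
operator `A` on `ℓ²(ℤ)` whose inverse is also lower triangular has plus-index zero:
`Q A Q + (I − Q)` is Fredholm with index `0`. -/
theorem lower_triangular_with_lower_triangular_inverse_plus_index_zero
    (A A' : H →L[ℂ] H)
    (hbd : IsBandDominated A) (hLT : IsLowerTriangular A)
    (hinv₁ : A' ∘L A = 1) (hinv₂ : A ∘L A' = 1)
    (hLT' : IsLowerTriangular A')
    (Q : H →L[ℂ] H)
    (hQ : ∀ (x : H) (i : ℤ), Q x i = if 1 ≤ i then x i else 0) :
    IsFredholm (Q ∘L A ∘L Q + (1 - Q)) ∧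
    fredholmIndex (Q ∘L A ∘L Q + (1 - Q)) = 0 :=
  lower_triangular_with_lower_triangular_inverse_plus_index_zero_general A A' hLT hinv₁ hinv₂ hLT' Q
    hQ
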